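/- Let T be an n×n real M-matrix (or an irreducible matrix satisfying condition T2 together with vᵀb ≤ 0), and consider the iteration P⁰ = O, (I − Pᵏ + T·Pᵏ)·x^{k+1} = b, Pᵏ = P(xᵏ) for k ≥ 1. Then the projection matrices are monotonically nondecreasing: P^{k+1} ≥ Pᵏ ≥ O entrywise for all k = 0, 1, 2, … -/

import Mathlib

open Matrix

/-- Spectral radius of a real matrix: supremum of absolute values of its complex eigenvalues. -/
noncomputable def specRad {n : ℕ} (B : Matrix (Fin n) (Fin n) ℝ) : ℝ :=
  sSup {r : ℝ | ∃ μ ∈ spectrum ℂ (B.map (fun a => (a : ℂ))), r = ‖μ‖}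

/-- `T` is an M-matrix: `T = α•I - B` with `B ≥ O` entrywise and `ρ(B) < α`. -/
def IsMmat {n : ℕ} (T : Matrix (Fin n) (Fin n) ℝ) : Prop :=
  ∃ (α : ℝ) (B : Matrix (Fin n) (Fin n) ℝ),
    (∀ i j, 0 ≤ B i j) ∧ specRad B < α ∧ T = α • (1 : Matrix (Fin n) (Fin n) ℝ) - B

/-- `P(x)`: diagonal matrix with i-th entry `1` if `x i ≥ 0`, else `0`. -/
noncomputable def Pmat {n : ℕ} (x : Fin n → ℝ) : Matrix (Fin n) (Fin n) ℝ :=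
  Matrix.diagonal fun i => if 0 ≤ x i then 1 else 0

/-- Irreducibility of a matrix (strong connectivity of its directed graph). -/
def IsIrred {n : ℕ} (T : Matrix (Fin n) (Fin n) ℝ) : Prop :=
  ∀ S : Finset (Fin n), S.Nonempty → S ≠ Finset.univ → ∃ i ∈ S, ∃ j ∉ S, T i j ≠ 0

/-- Condition T2: `T` is irreducible, `null(Tᵀ) = span(v)`, `null(T) = span(w)` with
`v, w > 0` componentwise, and `T + D` is an M-matrix for every diagonal `D ≥ O`, `D ≠ O`. -/
def CondT2 {n : ℕ} (T : Matrix (Fin n) (Fin n) ℝ) (v w : Fin n → ℝ) : Prop :=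
  IsIrred T ∧ (∀ i, 0 < v i) ∧ (∀ i, 0 < w i) ∧
  LinearMap.ker (Matrix.mulVecLin Tᵀ) = Submodule.span ℝ {v} ∧
  LinearMap.ker (Matrix.mulVecLin T) = Submodule.span ℝ {w} ∧
  (∀ d : Fin n → ℝ, (∀ i, 0 ≤ d i) → d ≠ 0 → IsMmat (T + Matrix.diagonal d))

/-! For a 0/1 vector `p` write `M_p = iterMatrix T p = I - diag p + T diag p`, so that
`x^{k+1} = M_{p_k}⁻¹ b`. If `T` is an M-matrix, `M_p` is a Z-matrix sending some positive vector
to a positive vector, hence monotone: `M_p y ≥ 0` forces `y ≥ 0`. Under T2 the same holds for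
`p ≠ 1`, because `M_p` does not change when the diagonal `1 - p` is added to `T`, and that sum is
an M-matrix. Now let `q ≤ p = P(x)` with `M_q x = M_p y = b`. From
`M_p (I - diag p + diag q) = M_q - diag (p - q)` one gets `M_p (y - (1 - p + q) x) = (p - q) x ≥ 0`,
so `y ≥ (1 - p + q) x`, and `y_i ≥ q_i x_i ≥ 0` wherever `x_i ≥ 0`: the projections increase.
The positive vector of an M-matrix `α I - B` comes from Gelfand's formula: some power `B^N` has
all row sums below `α^N`. -/

def IsZMatrix {ι R : Type*} [Zero R] [LE R] (M : Matrix ι ι R) : Prop :=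
  ∀ i j, i ≠ j → M i j ≤ 0

/-- Collatz's monotone (inverse-positive) matrices. -/
def IsMonotoneMatrix {ι R : Type*} [Fintype ι] [NonUnitalNonAssocSemiring R] [Preorder R]
    (M : Matrix ι ι R) : Prop :=
  ∀ v : ι → R, 0 ≤ M *ᵥ v → 0 ≤ v

/-- The matrix `I - P + T P` of the iteration, `P = diagonal p`: its `j`-th column is the `j`-th
column of `T` where `p j = 1`, and the `j`-th unit vector where `p j = 0`. -/
def iterMatrix {ι R : Type*} [Fintype ι] [DecidableEq ι] [Ring R] (T : Matrix ι ι R)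
    (p : ι → R) : Matrix ι ι R :=
  1 - diagonal p + T * diagonal p

theorem mul_self_of_forall_eq_zero_or_eq_one {ι M : Type*} [MulZeroOneClass M] {p : ι → M}
    (hp : ∀ i, p i = 0 ∨ p i = 1) : p * p = p :=
  funext fun i => by rcases hp i with h | h <;> simp [h]

theorem one_sub_add_mul_mul_one_sub_add {A : Type*} [Ring A] {t p q : A} (hp : p * p = p)
    (hpq : p * q = q) :
    (1 - p + t * p) * (1 - p + q) = 1 - q + t * q - (p - q) := by
  have hp' : p * (1 - p) = 0 := by rw [mul_sub, mul_one, hp, sub_self]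
  have hq' : (1 - p) * q = 0 := by rw [sub_mul, one_mul, hpq, sub_self]
  calc (1 - p + t * p) * (1 - p + q)
      = (1 - p) - p * (1 - p) + (1 - p) * q + t * (p * (1 - p)) + t * (p * q) := by noncomm_ring
    _ = 1 - q + t * q - (p - q) := by rw [hp', hq', hpq, mul_zero]; abel

theorem diagonal_apply_le_diagonal_apply {ι R : Type*} [DecidableEq ι] [Zero R] [Preorder R]
    {d e : ι → R} (h : d ≤ e) (i j : ι) : diagonal d i j ≤ diagonal e i j := by
  rcases eq_or_ne i j with rfl | hij
  · simpa using h i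
  · simp [diagonal_apply_ne _ hij]

section IterMatrix

variable {ι R : Type*} [Fintype ι] [DecidableEq ι] [CommRing R]

theorem diagonal_mulVec_eq_mul (p u : ι → R) : diagonal p *ᵥ u = p * u :=
  funext fun i => mulVec_diagonal p u i

theorem iterMatrix_mulVec (T : Matrix ι ι R) (p u : ι → R) :
    iterMatrix T p *ᵥ u = (1 - p) * u + T *ᵥ (p * u) := by
  rw [iterMatrix, add_mulVec, sub_mulVec, one_mulVec, ← mulVec_mulVec, diagonal_mulVec_eq_mul]
  ring

theorem iterMatrix_one (T : Matrix ι ι R) : iterMatrix T 1 = T := by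
  simp [iterMatrix]

theorem iterMatrix_add_diagonal_one_sub (T : Matrix ι ι R) {p : ι → R} (hp : p * p = p) :
    iterMatrix (T + diagonal (1 - p)) p = iterMatrix T p := by
  rw [iterMatrix, iterMatrix, add_mul, diagonal_mul_diagonal]
  simp only [Pi.sub_apply, Pi.one_apply, sub_mul, one_mul]
  simp [show ∀ i, p i * p i = p i from congrFun hp]

theorem iterMatrix_mul_diagonal (T : Matrix ι ι R) {p q : ι → R} (hp : p * p = p)
    (hpq : p * q = q) :
    iterMatrix T p * diagonal (1 - p + q) = iterMatrix T q - diagonal (p - q) := by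
  rw [iterMatrix, iterMatrix, show diagonal (1 - p + q) = 1 - diagonal p + diagonal q by
    simp [← diagonal_one], show diagonal (p - q) = diagonal p - diagonal q by simp]
  exact one_sub_add_mul_mul_one_sub_add (by rw [diagonal_mul_diagonal]; exact congrArg _ hp)
    (by rw [diagonal_mul_diagonal]; exact congrArg _ hpq)

end IterMatrix

section MonotoneMatrix

variable {ι R : Type*} [Fintype ι] [Field R] [LinearOrder R] [IsStrictOrderedRing R]

/-- At an index where `y / u` is minimal and negative, `M y` would be negative. -/
theorem IsZMatrix.isMonotoneMatrix {M : Matrix ι ι R} (hM : IsZMatrix M) {u : ι → R}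
    (hu : ∀ i, 0 < u i) (hMu : ∀ i, 0 < (M *ᵥ u) i) : IsMonotoneMatrix M := by
  intro y hy
  by_contra hneg
  obtain ⟨i, hi⟩ : ∃ i, y i < 0 := by simpa [Pi.le_def] using hneg
  obtain ⟨m, -, hm⟩ :=
    Finset.exists_min_image Finset.univ (fun j => y j / u j) ⟨i, Finset.mem_univ i⟩
  set t := y m / u m
  have ht : t < 0 := (hm i (Finset.mem_univ i)).trans_lt (div_neg_of_neg_of_pos hi (hu i))
  have hs : ∀ j, 0 ≤ (y - t • u) j := fun j => by
    simpa [sub_nonneg, ← le_div_iff₀ (hu j)] using hm j (Finset.mem_univ j)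
  have hsm : (y - t • u) m = 0 := by simp [t, div_mul_cancel₀ _ (hu m).ne']
  have hle : (M *ᵥ (y - t • u)) m ≤ 0 := by
    refine Finset.sum_nonpos fun j _ => ?_
    rcases eq_or_ne m j with rfl | hj
    · simp [hsm]
    · exact mul_nonpos_of_nonpos_of_nonneg (hM m j hj) (hs j)
  have hpos : 0 < (M *ᵥ (y - t • u)) m := by
    rw [mulVec_sub, mulVec_smul, Pi.sub_apply, Pi.smul_apply, smul_eq_mul]
    have hym : 0 ≤ (M *ᵥ y) m := hy m
    linarith [mul_neg_of_neg_of_pos ht (hMu m)]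
  exact hle.not_gt hpos

variable [DecidableEq ι]

theorem IsMonotoneMatrix.isUnit_det {M : Matrix ι ι R} (hM : IsMonotoneMatrix M) :
    IsUnit M.det := by
  rw [isUnit_iff_ne_zero, Ne, ← exists_mulVec_eq_zero_iff]
  rintro ⟨v, hv, hMv⟩
  refine hv (le_antisymm ?_ (hM v (by rw [hMv])))
  simpa using hM (-v) (by rw [mulVec_neg, hMv, neg_zero])

theorem IsMonotoneMatrix.mulVec_inv_mulVec {M : Matrix ι ι R} (hM : IsMonotoneMatrix M)
    (b : ι → R) : M *ᵥ (M⁻¹ *ᵥ b) = b := by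
  rw [mulVec_mulVec, mul_nonsing_inv _ hM.isUnit_det, one_mulVec]

theorem isZMatrix_iterMatrix {T : Matrix ι ι R} (hT : IsZMatrix T) {p : ι → R}
    (hp : ∀ i, 0 ≤ p i) : IsZMatrix (iterMatrix T p) := fun i j hij => by
  simp [iterMatrix, one_apply_ne hij, diagonal_apply_ne _ hij, mul_diagonal,
    mul_nonpos_of_nonpos_of_nonneg (hT i j hij) (hp j)]

/-- Where `p = 1` the columns of `T` only lose their non-positive off-diagonal part, and where
`p = 0` a large enough entry of `u` makes the row positive. -/
theorem IsZMatrix.exists_pos_iterMatrix_mulVec_pos {T : Matrix ι ι R} (hT : IsZMatrix T)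
    {u₀ : ι → R} (hu₀ : ∀ i, 0 < u₀ i) (hTu₀ : ∀ i, 0 < (T *ᵥ u₀) i) {p : ι → R}
    (hp : ∀ i, p i = 0 ∨ p i = 1) :
    ∃ u : ι → R, (∀ i, 0 < u i) ∧ ∀ i, 0 < (iterMatrix T p *ᵥ u) i := by
  set w := T *ᵥ (p * u₀)
  set K := 1 + ∑ i, |w i|
  have hK0 : 0 < K := by positivity
  have hK : ∀ i, 0 < K + w i := fun i => by
    have := Finset.single_le_sum (fun j _ => abs_nonneg (w j)) (Finset.mem_univ i)
    linarith [neg_abs_le (w i)]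
  have hTw : ∀ i, p i = 1 → (T *ᵥ u₀) i ≤ w i := fun i hi => by
    refine Finset.sum_le_sum fun j _ => ?_
    rcases eq_or_ne i j with rfl | hij
    · simp [hi]
    rcases hp j with hj | hj <;> simp [hj, mul_nonpos_of_nonpos_of_nonneg (hT i j hij) (hu₀ j).le]
  set u := p * u₀ + K • (1 - p)
  have hpu : p * u = p * u₀ := funext fun j => by rcases hp j with hj | hj <;> simp [u, hj]
  refine ⟨u, fun i => ?_, fun i => ?_⟩
  · rcases hp i with hi | hi
    · simpa [u, hi] using hK0
    · simpa [u, hi] using hu₀ i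
  · rw [iterMatrix_mulVec, hpu]
    rcases hp i with hi | hi
    · simpa [u, hi] using hK i
    · simpa [hi] using (hTu₀ i).trans_le (hTw i hi)

theorem le_of_iterMatrix_mulVec_eq {T : Matrix ι ι R} {p q x y b : ι → R}
    (hmono : IsMonotoneMatrix (iterMatrix T p)) (hp : p * p = p) (hpq : p * q = q)
    (hx : iterMatrix T q *ᵥ x = b) (hy : iterMatrix T p *ᵥ y = b) (hpqx : 0 ≤ (p - q) * x) :
    (1 - p + q) * x ≤ y := by
  refine sub_nonneg.mp (hmono _ ?_)
  rwa [mulVec_sub, ← diagonal_mulVec_eq_mul, mulVec_mulVec, iterMatrix_mul_diagonal T hp hpq,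
    sub_mulVec, hx, hy, diagonal_mulVec_eq_mul, sub_sub_cancel]

end MonotoneMatrix

section Spectral

attribute [local instance] Matrix.linftyOpSeminormedAddCommGroup Matrix.linftyOpNormedRing
  Matrix.linftyOpNormedAlgebra

theorem sum_norm_le_linfty_opNorm {m n α : Type*} [Fintype m] [Fintype n]
    [SeminormedAddCommGroup α] (A : Matrix m n α) (i : m) : ∑ j, ‖A i j‖ ≤ ‖A‖ := by
  rw [linfty_opNorm_def]
  have := NNReal.coe_le_coe.mpr (Finset.le_sup (f := fun i => ∑ j, ‖A i j‖₊) (Finset.mem_univ i))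
  simpa using this

theorem specRad_nonneg {n : ℕ} (B : Matrix (Fin n) (Fin n) ℝ) : 0 ≤ specRad B :=
  Real.sSup_nonneg (by rintro _ ⟨μ, -, rfl⟩; exact norm_nonneg μ)

theorem norm_le_specRad {n : ℕ} {B : Matrix (Fin n) (Fin n) ℝ} {μ : ℂ}
    (hμ : μ ∈ spectrum ℂ (B.map (fun a => (a : ℂ)))) : ‖μ‖ ≤ specRad B := by
  have : CompleteSpace (Matrix (Fin n) (Fin n) ℂ) := FiniteDimensional.complete ℂ _
  have hbdd := ((spectrum.isCompact (𝕜 := ℂ) (B.map (fun a => (a : ℂ)))).image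
    continuous_norm).bddAbove
  refine le_csSup (hbdd.mono ?_) ⟨μ, hμ, rfl⟩
  rintro _ ⟨ν, hν, rfl⟩
  exact ⟨ν, hν, rfl⟩

/-- Gelfand's formula for the `ℓ∞` operator norm of the complexification of `B`. -/
theorem exists_sum_pow_apply_lt {n : ℕ} [Nonempty (Fin n)] {B : Matrix (Fin n) (Fin n) ℝ}
    (hB : ∀ i j, 0 ≤ B i j) {α : ℝ} (hα : specRad B < α) :
    ∃ N : ℕ, ∀ i, ∑ j, (B ^ N) i j < α ^ N := by
  have : CompleteSpace (Matrix (Fin n) (Fin n) ℂ) := FiniteDimensional.complete ℂ _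
  have hα0 : 0 < α := (specRad_nonneg B).trans_lt hα
  set Bc := B.map (fun a => (a : ℂ))
  have hρ : spectralRadius ℂ Bc < ENNReal.ofReal α :=
    spectrum.spectralRadius_lt_of_forall_lt Bc fun μ hμ =>
      Real.lt_toNNReal_iff_coe_lt.mpr ((norm_le_specRad hμ).trans_lt hα)
  obtain ⟨N, hN, hN1⟩ :=
    (((spectrum.pow_norm_pow_one_div_tendsto_nhds_spectralRadius Bc).eventually
      (gt_mem_nhds hρ)).and (Filter.eventually_ge_atTop 1)).exists
  have hnorm : ‖Bc ^ N‖ < α ^ N := by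
    rw [ENNReal.ofReal_lt_ofReal_iff hα0, one_div,
      Real.rpow_inv_lt_iff_of_pos (norm_nonneg _) hα0.le (by exact_mod_cast hN1),
      Real.rpow_natCast] at hN
    exact hN
  refine ⟨N, fun i => (le_of_eq ?_).trans_lt ((sum_norm_le_linfty_opNorm _ i).trans_lt hnorm)⟩
  refine Finset.sum_congr rfl fun j _ => ?_
  rw [show Bc = B.map Complex.ofRealHom from rfl, ← Matrix.map_pow, map_apply,
    Complex.ofRealHom_eq_coe, Complex.norm_real, Real.norm_of_nonneg (pow_apply_nonneg hB N i j)]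

end Spectral

/-- With `S = ∑_{m<N} (α • 1)^m B^(N-1-m)` one has `(α • 1 - B) S = α^N • 1 - B^N`, so
`u = S *ᵥ 1` works. -/
theorem exists_pos_smul_one_sub_mulVec_pos {ι : Type*} [Fintype ι] [DecidableEq ι]
    {B : Matrix ι ι ℝ} (hB : ∀ i j, 0 ≤ B i j) {α : ℝ} (hα : 0 < α) {N : ℕ}
    (hN : ∀ i, ∑ j, (B ^ N) i j < α ^ N) :
    ∃ u : ι → ℝ, (∀ i, 0 < u i) ∧ ∀ i, 0 < ((α • 1 - B) *ᵥ u) i := by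
  set S := ∑ m ∈ Finset.range N, (α • 1 : Matrix ι ι ℝ) ^ m * B ^ (N - 1 - m)
  have hS : (α • 1 - B) * S = α ^ N • 1 - B ^ N := by
    rw [((Commute.one_left B).smul_left α).mul_geom_sum₂, smul_pow, one_pow]
  have hS0 : ∀ i j, 0 ≤ S i j := fun i j => by
    simp only [S, Matrix.sum_apply, smul_pow, one_pow, smul_mul_assoc, one_mul, Matrix.smul_apply,
      smul_eq_mul]
    exact Finset.sum_nonneg fun m _ => mul_nonneg (pow_nonneg hα.le m) (pow_apply_nonneg hB _ i j)
  set u := S *ᵥ 1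
  have hu0 : ∀ i, 0 ≤ u i := fun i => Finset.sum_nonneg fun j _ => by simpa using hS0 i j
  have hpos : ∀ i, 0 < ((α • 1 - B) *ᵥ u) i := fun i => by
    rw [mulVec_mulVec, hS, sub_mulVec, smul_mulVec, one_mulVec]
    simpa [mulVec, dotProduct] using hN i
  refine ⟨u, fun i => ?_, hpos⟩
  have hBu : 0 ≤ (B *ᵥ u) i := Finset.sum_nonneg fun j _ => mul_nonneg (hB i j) (hu0 j)
  have := hpos i
  rw [sub_mulVec, smul_mulVec, one_mulVec, Pi.sub_apply, Pi.smul_apply, smul_eq_mul] at this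
  exact pos_of_mul_pos_right (by linarith) hα.le

section MMatrix

variable {n : ℕ} {T : Matrix (Fin n) (Fin n) ℝ}

theorem IsMmat.isZMatrix (hT : IsMmat T) : IsZMatrix T := by
  obtain ⟨α, B, hB, -, rfl⟩ := hT
  intro i j hij
  simp [one_apply_ne hij, hB i j]

theorem IsMmat.exists_pos_mulVec_pos (hT : IsMmat T) :
    ∃ u : Fin n → ℝ, (∀ i, 0 < u i) ∧ ∀ i, 0 < (T *ᵥ u) i := by
  rcases isEmpty_or_nonempty (Fin n) with hn | hn
  · exact ⟨0, isEmptyElim, isEmptyElim⟩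
  obtain ⟨α, B, hB, hα, rfl⟩ := hT
  obtain ⟨N, hN⟩ := exists_sum_pow_apply_lt hB hα
  exact exists_pos_smul_one_sub_mulVec_pos hB ((specRad_nonneg B).trans_lt hα) hN

theorem IsMmat.isMonotoneMatrix_iterMatrix (hT : IsMmat T) {p : Fin n → ℝ}
    (hp : ∀ i, p i = 0 ∨ p i = 1) : IsMonotoneMatrix (iterMatrix T p) := by
  obtain ⟨u₀, hu₀, hTu₀⟩ := hT.exists_pos_mulVec_pos
  obtain ⟨u, hu, hMu⟩ := hT.isZMatrix.exists_pos_iterMatrix_mulVec_pos hu₀ hTu₀ hp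
  refine (isZMatrix_iterMatrix hT.isZMatrix fun i => ?_).isMonotoneMatrix hu hMu
  rcases hp i with h | h <;> simp [h]

theorem CondT2.isMonotoneMatrix_iterMatrix {v w : Fin n → ℝ} (hT : CondT2 T v w)
    {p : Fin n → ℝ} (hp : ∀ i, p i = 0 ∨ p i = 1) (hp1 : p ≠ 1) :
    IsMonotoneMatrix (iterMatrix T p) := by
  obtain ⟨-, -, -, -, -, hshift⟩ := hT
  have hM : IsMmat (T + diagonal (1 - p)) :=
    hshift _ (fun i => by rcases hp i with h | h <;> simp [h]) (sub_ne_zero.mpr hp1.symm)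
  rw [← iterMatrix_add_diagonal_one_sub T (mul_self_of_forall_eq_zero_or_eq_one hp)]
  exact hM.isMonotoneMatrix_iterMatrix hp

theorem CondT2.inv_eq_zero [Nonempty (Fin n)] {v w : Fin n → ℝ} (hT : CondT2 T v w) :
    T⁻¹ = 0 := by
  obtain ⟨-, -, hw, -, hker, -⟩ := hT
  have hTw : T *ᵥ w = 0 := by
    simpa using (hker ▸ Submodule.mem_span_singleton_self w : w ∈ LinearMap.ker T.mulVecLin)
  have hw0 : w ≠ 0 := fun h => (hw (Classical.arbitrary _)).ne' (congrFun h _)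
  exact nonsing_inv_apply_not_isUnit T
    (by rw [isUnit_iff_ne_zero, not_not]; exact exists_mulVec_eq_zero_iff.mp ⟨w, hw0, hTw⟩)

theorem isMonotoneMatrix_iterMatrix_or [Nonempty (Fin n)] {v w : Fin n → ℝ}
    (hT : IsMmat T ∨ CondT2 T v w) {p : Fin n → ℝ} (hp : ∀ i, p i = 0 ∨ p i = 1) :
    IsMonotoneMatrix (iterMatrix T p) ∨ (p = 1 ∧ T⁻¹ = 0) := by
  rcases hT with hT | hT
  · exact Or.inl (hT.isMonotoneMatrix_iterMatrix hp)
  · by_cases hp1 : p = 1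
    · exact Or.inr ⟨hp1, hT.inv_eq_zero⟩
    · exact Or.inl (hT.isMonotoneMatrix_iterMatrix hp hp1)

/-- When `P(x) = 1` and `T` is singular, the inverse below is the junk value `0`. -/
theorem nonneg_next_iterate_of_nonneg {v w b q x : Fin n → ℝ} (hT : IsMmat T ∨ CondT2 T v w)
    (hq : ∀ i, q i = 0 ∨ q i = 1) (hqx : ∀ i, q i = 1 → 0 ≤ x i)
    (hx : x = (iterMatrix T q)⁻¹ *ᵥ b) {i : Fin n} (hxi : 0 ≤ x i) :
    0 ≤ ((1 - Pmat x + T * Pmat x)⁻¹ *ᵥ b) i := by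
  have : Nonempty (Fin n) := ⟨i⟩
  set p : Fin n → ℝ := fun j => if 0 ≤ x j then 1 else 0
  change 0 ≤ ((iterMatrix T p)⁻¹ *ᵥ b) i
  have hp : ∀ j, p j = 0 ∨ p j = 1 := fun j => by by_cases h : 0 ≤ x j <;> simp [p, h]
  have hpq : p * q = q := funext fun j => by
    rcases hq j with h | h
    · simp [h]
    · simp [p, h, hqx j h]
  have hpqx : 0 ≤ (p - q) * x := fun j => by
    by_cases h : 0 ≤ x j
    · rcases hq j with hqj | hqj <;> simp [p, h, hqj]
    · rcases hq j with hqj | hqj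
      · simp [p, h, hqj]
      · exact absurd (hqx j hqj) h
  rcases isMonotoneMatrix_iterMatrix_or hT hp with hMp | ⟨hp1, hTinv⟩
  · rcases isMonotoneMatrix_iterMatrix_or hT hq with hMq | ⟨rfl, -⟩
    · have hle := le_of_iterMatrix_mulVec_eq hMp (mul_self_of_forall_eq_zero_or_eq_one hp) hpq
        (hx ▸ hMq.mulVec_inv_mulVec b) (hMp.mulVec_inv_mulVec b) hpqx i
      simp only [Pi.mul_apply, Pi.add_apply, Pi.sub_apply, Pi.one_apply, p, if_pos hxi,
        sub_self, zero_add] at hle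
      exact (mul_nonneg (by rcases hq i with h | h <;> simp [h]) hxi).trans hle
    · rwa [show p = 1 by simpa using hpq, ← hx]
  · rw [hp1, iterMatrix_one, hTinv, zero_mulVec]
    rfl

end MMatrix

/-- If `T` is an M-matrix, or irreducible satisfying condition T2 with
`vᵀb ≤ 0`, then along the iteration `P⁰ = O`, `x^{k+1} = (I − Pᵏ + T·Pᵏ)⁻¹·b`,
`Pᵏ = P(xᵏ)` for `k ≥ 1`, the projection matrices are monotonically nondecreasing:
`P^{k+1} ≥ Pᵏ ≥ O` entrywise for all `k`. -/
theorem stmt9 {n : ℕ} (T : Matrix (Fin n) (Fin n) ℝ) (v w b : Fin n → ℝ)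
    (hT : IsMmat T ∨ (CondT2 T v w ∧ v ⬝ᵥ b ≤ 0))
    (x : ℕ → Fin n → ℝ) (P : ℕ → Matrix (Fin n) (Fin n) ℝ)
    (hP0 : P 0 = 0) (hPk : ∀ k, 1 ≤ k → P k = Pmat (x k))
    (hit : ∀ k, x (k + 1) = (1 - P k + T * P k)⁻¹ *ᵥ b) :
    ∀ k, (∀ i j, P k i j ≤ P (k + 1) i j) ∧ (∀ i j, 0 ≤ P k i j) := by
  set q : ℕ → Fin n → ℝ := fun k j => if k = 0 then 0 else if 0 ≤ x k j then 1 else 0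
  have hPq : ∀ k, P k = diagonal (q k) := by
    rintro (_ | k)
    · simp [hP0, q]
    · simp [hPk (k + 1) (by omega), q, Pmat]
  have hq : ∀ k j, q k j = 0 ∨ q k j = 1 := fun k j => by
    simp only [q]; split_ifs <;> simp
  have hmono : ∀ k j, q k j = 1 → 0 ≤ x (k + 1) j := by
    intro k
    induction k with
    | zero => simp [q]
    | succ k ih =>
      intro j hj
      rw [hit, hPk _ (by omega)]
      exact nonneg_next_iterate_of_nonneg (hT.imp_right And.left) (hq k) ih (by rw [hit, hPq]; rfl)
        (by simpa [q] using hj)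
  intro k
  have hqk : q k ≤ q (k + 1) := fun i => by
    rcases hq k i with h | h
    · rcases hq (k + 1) i with h' | h' <;> simp [h, h']
    · simp [h, q, hmono k i h]
  have hq0 : 0 ≤ q k := fun i => by rcases hq k i with h | h <;> simp [h]
  rw [hPq, hPq]
  exact ⟨diagonal_apply_le_diagonal_apply hqk, fun i j => by
    simpa using diagonal_apply_le_diagonal_apply hq0 i j⟩
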